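/- Let k ≥ 1, let G be a k-edge-connected finite simple graph on V, fix a root r ∈ V, and let u₀, …, u_t together with k-cuts S₀, …, S_{t+1} form a snug chain. Let v ∈ V∖S_{t+1} and let 0 ≤ j < i ≤ t. Then every k-cut S of G that is crossed by the pair {v, u_i} is also crossed by the pair {v, u_j}. -/

import Mathlib

/-!
Fix `i` and put `A = S_i`, `a = u_i`, so that `A` and `A ∪ {a}` are `k`-cuts while `d(a) > k`.
If a `k`-cut `B` contains `a` but not `v`, then `A ⊆ B`: otherwise posimodularity forces
`d(B ∖ A) = k`, and submodularity applied to `B ∖ A` and `A ∪ {a}`, whose intersection is `{a}`,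
gives `d(a) + d(A ∪ B) ≤ 2k`, contradicting `d(a) ≥ k + 1` and `d(A ∪ B) ≥ k`. Replacing a cut
by its complement if necessary, every `k`-cut separating `v` from `u_i` therefore separates `v`
from all of `S_i`, which contains `u_j` for `j < i`.
-/

open Finset

variable {V : Type*} [Fintype V] [DecidableEq V]

/-- `Crosses S e`: exactly one endpoint of the edge/link `e` lies in `S`. -/
def Crosses (S : Finset V) (e : Sym2 V) : Prop :=
  ∃ x y : V, e = s(x, y) ∧ x ∈ S ∧ y ∉ S

instance (S : Finset V) : DecidablePred (Crosses S) := fun e =>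
  decidable_of_iff (∃ x y : V, e = s(x, y) ∧ x ∈ S ∧ y ∉ S) Iff.rfl

/-- The cut `δ(S)`: edges of `G` with exactly one endpoint in `S`. -/
def cutEdges (G : SimpleGraph V) [DecidableRel G.Adj] (S : Finset V) :
    Finset (Sym2 V) :=
  G.edgeFinset.filter fun e => Crosses S e

/-- `G` is `k`-edge-connected: every nonempty proper cut has at least `k` crossing edges. -/
def EdgeConnected (G : SimpleGraph V) [DecidableRel G.Adj] (k : ℕ) : Prop :=
  ∀ S : Finset V, S.Nonempty → S ≠ Finset.univ → k ≤ (cutEdges G S).card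

/-- `S` is a `k`-cut: a nonempty proper vertex set with exactly `k` crossing edges. -/
def IsCut (G : SimpleGraph V) [DecidableRel G.Adj] (k : ℕ) (S : Finset V) : Prop :=
  S.Nonempty ∧ S ≠ Finset.univ ∧ (cutEdges G S).card = k

/-- `(S₁, S₂)` are snug shores for `v` (with respect to the root `r`):
two `k`-cuts avoiding `r` with `v ∉ S₁` and `S₂ = S₁ ∪ {v}`. -/
def SnugShores (G : SimpleGraph V) [DecidableRel G.Adj] (k : ℕ) (r v : V)
    (S₁ S₂ : Finset V) : Prop :=
  IsCut G k S₁ ∧ IsCut G k S₂ ∧ r ∉ S₁ ∧ r ∉ S₂ ∧ v ∉ S₁ ∧ S₂ = insert v S₁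

/-- `v` is a snug vertex (with respect to the root `r`). -/
def Snug (G : SimpleGraph V) [DecidableRel G.Adj] (k : ℕ) (r v : V) : Prop :=
  v ≠ r ∧ k + 1 ≤ G.degree v ∧ ∃ S₁ S₂ : Finset V, SnugShores G k r v S₁ S₂

/-- A snug chain: snug vertices `u 0, …, u t` together with `k`-cuts
`S 0, …, S (t+1)` such that `(S i, S (i+1))` are snug shores for `u i`. -/
def IsSnugChain (G : SimpleGraph V) [DecidableRel G.Adj] (k : ℕ) (r : V)
    (t : ℕ) (u : ℕ → V) (S : ℕ → Finset V) : Prop :=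
  ∀ i ≤ t, Snug G k r (u i) ∧ SnugShores G k r (u i) (S i) (S (i + 1))

theorem crosses_mk_iff {α : Type*} (S : Finset α) (x y : α) :
    Crosses S s(x, y) ↔ (x ∈ S ↔ y ∉ S) := by
  constructor
  · rintro ⟨a, b, hab, ha, hb⟩
    rcases Sym2.eq_iff.mp hab with ⟨rfl, rfl⟩ | ⟨rfl, rfl⟩ <;> tauto
  · intro h
    by_cases hx : x ∈ S
    · exact ⟨x, y, rfl, hx, h.mp hx⟩
    · exact ⟨y, x, Sym2.eq_swap, by tauto, hx⟩

theorem crosses_compl (S : Finset V) (e : Sym2 V) : Crosses Sᶜ e ↔ Crosses S e := by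
  induction e using Sym2.inductionOn with
  | hf x y => simp only [crosses_mk_iff, mem_compl]; tauto

section Cuts

variable (G : SimpleGraph V) [DecidableRel G.Adj]

theorem cutEdges_compl (S : Finset V) : cutEdges G Sᶜ = cutEdges G S :=
  filter_congr fun e _ => crosses_compl S e

theorem card_cutEdges_singleton (a : V) : #(cutEdges G {a}) = G.degree a := by
  rw [← SimpleGraph.card_incidenceFinset_eq_degree]
  congr 1
  ext e
  induction e using Sym2.inductionOn with
  | hf x y =>
    simp only [cutEdges, SimpleGraph.incidenceFinset, mem_filter, Set.mem_toFinset,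
      SimpleGraph.mem_edgeFinset, SimpleGraph.mem_edgeSet, crosses_mk_iff, mem_singleton,
      SimpleGraph.mk'_mem_incidenceSet_iff]
    refine and_congr_right fun hxy => ?_
    have := hxy.ne
    grind

theorem card_cutEdges_inter_add_card_cutEdges_union_le (A B : Finset V) :
    #(cutEdges G (A ∩ B)) + #(cutEdges G (A ∪ B)) ≤ #(cutEdges G A) + #(cutEdges G B) := by
  simp only [cutEdges, card_filter, ← sum_add_distrib]
  refine sum_le_sum fun e _ => ?_
  induction e using Sym2.inductionOn with
  | hf x y =>
    simp only [crosses_mk_iff, mem_inter, mem_union]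
    by_cases hxA : x ∈ A <;> by_cases hxB : x ∈ B <;> by_cases hyA : y ∈ A <;>
      by_cases hyB : y ∈ B <;> simp [hxA, hxB, hyA, hyB]

theorem card_cutEdges_sdiff_add_card_cutEdges_sdiff_le (A B : Finset V) :
    #(cutEdges G (A \ B)) + #(cutEdges G (B \ A)) ≤ #(cutEdges G A) + #(cutEdges G B) := by
  have h := card_cutEdges_inter_add_card_cutEdges_union_le G A Bᶜ
  rwa [cutEdges_compl, ← cutEdges_compl G (A ∪ Bᶜ), compl_union, compl_compl, inter_comm Aᶜ,
    ← sdiff_eq_inter_compl, ← sdiff_eq_inter_compl] at h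

variable {G}

theorem IsCut.compl {k : ℕ} {S : Finset V} (hS : IsCut G k S) : IsCut G k Sᶜ :=
  ⟨nonempty_iff_ne_empty.mpr fun h => hS.2.1 ((compl_eq_empty_iff S).mp h),
    (compl_ne_univ_iff_nonempty S).mpr hS.1,
    by rw [cutEdges_compl]; exact hS.2.2⟩

theorem EdgeConnected.le_card_cutEdges {k : ℕ} (hG : EdgeConnected G k) {S : Finset V}
    {x y : V} (hx : x ∈ S) (hy : y ∉ S) : k ≤ #(cutEdges G S) :=
  hG S ⟨x, hx⟩ fun h => hy (h ▸ mem_univ y)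

theorem EdgeConnected.subset_of_isCut_insert {k : ℕ} (hG : EdgeConnected G k)
    {A B : Finset V} {a v : V} (hA : IsCut G k A) (hA' : IsCut G k (insert a A))
    (haA : a ∉ A) (hdeg : k + 1 ≤ G.degree a) (hvA : v ∉ A)
    (hB : IsCut G k B) (haB : a ∈ B) (hvB : v ∉ B) : A ⊆ B := by
  by_contra hnot
  obtain ⟨w, hwA, hwB⟩ := not_subset.mp hnot
  have hBA := hG.le_card_cutEdges (S := B \ A) (mem_sdiff.mpr ⟨haB, haA⟩)
    (fun h => hvB (mem_sdiff.mp h).1)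
  have hAB := hG.le_card_cutEdges (S := A \ B) (mem_sdiff.mpr ⟨hwA, hwB⟩)
    (fun h => hvA (mem_sdiff.mp h).1)
  have hposi := card_cutEdges_sdiff_add_card_cutEdges_sdiff_le G B A
  have hinter : (B \ A) ∩ insert a A = {a} := by
    ext z
    simp only [mem_inter, mem_sdiff, mem_insert, mem_singleton]
    grind
  have hsub := card_cutEdges_inter_add_card_cutEdges_union_le G (B \ A) (insert a A)
  rw [hinter, card_cutEdges_singleton] at hsub
  have hunion := hG.le_card_cutEdges (mem_union_right (B \ A) (mem_insert_self a A))
    fun h => by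
      rcases mem_union.mp h with h | h
      · exact hvB (mem_sdiff.mp h).1
      · rcases mem_insert.mp h with rfl | h
        exacts [hvB haB, hvA h]
  rw [hA.2.2, hB.2.2] at hposi
  rw [hA'.2.2] at hsub
  omega

theorem EdgeConnected.crosses_of_isCut_insert {k : ℕ} (hG : EdgeConnected G k)
    {A B : Finset V} {a v w : V} (hA : IsCut G k A) (hA' : IsCut G k (insert a A))
    (haA : a ∉ A) (hdeg : k + 1 ≤ G.degree a) (hvA : v ∉ A)
    (hB : IsCut G k B) (hcross : Crosses B s(v, a)) (hwA : w ∈ A) : Crosses B s(v, w) := by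
  rw [crosses_mk_iff] at hcross ⊢
  by_cases haB : a ∈ B
  · have := hG.subset_of_isCut_insert hA hA' haA hdeg hvA hB haB (by tauto) hwA
    tauto
  · have := hG.subset_of_isCut_insert hA hA' haA hdeg hvA hB.compl (mem_compl.mpr haB)
      (by simp only [mem_compl]; tauto) hwA
    rw [mem_compl] at this
    tauto

end Cuts

namespace IsSnugChain

variable {G : SimpleGraph V} [DecidableRel G.Adj] {k : ℕ} {r : V} {t : ℕ} {u : ℕ → V}
  {S : ℕ → Finset V}

theorem mem_succ (h : IsSnugChain G k r t u S) {i : ℕ} (hi : i ≤ t) : u i ∈ S (i + 1) := by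
  rw [(h i hi).2.2.2.2.2.2]
  exact mem_insert_self _ _

theorem subset (h : IsSnugChain G k r t u S) {i j : ℕ} (hij : i ≤ j) (hj : j ≤ t + 1) :
    S i ⊆ S j := by
  induction j, hij using Nat.le_induction with
  | base => exact Subset.refl _
  | succ j _ ih =>
    refine (ih (by omega)).trans ?_
    rw [(h j (by omega)).2.2.2.2.2.2]
    exact subset_insert _ _

end IsSnugChain

theorem link_deepest_in_general
    (k : ℕ) (G : SimpleGraph V) [DecidableRel G.Adj]
    (hG : EdgeConnected G k) (r : V)
    (t : ℕ) (u : ℕ → V) (Sc : ℕ → Finset V)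
    (hchain : IsSnugChain G k r t u Sc)
    (v : V) (hv : v ∉ Sc (t + 1))
    (i j : ℕ) (hji : j < i) (hit : i ≤ t)
    (S : Finset V) (hS : IsCut G k S) (hcross : Crosses S s(v, u i)) :
    Crosses S s(v, u j) := by
  obtain ⟨⟨-, hdeg, -⟩, hA, hA', -, -, huA, hstep⟩ := hchain i hit
  rw [hstep] at hA'
  have hvA : v ∉ Sc i := fun h => hv (hchain.subset (by omega) le_rfl h)
  have hujA : u j ∈ Sc i := hchain.subset (by omega) (by omega) (hchain.mem_succ (by omega))
  exact hG.crosses_of_isCut_insert hA hA' huA hdeg hvA hS hcross hujA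

/-- Along a snug chain, for `v ∈ V ∖ S_{t+1}` and `j < i ≤ t`, every `k`-cut
crossed by the link `{v, u i}` is also crossed by the link `{v, u j}`. -/
theorem link_deepest_in
    (k : ℕ) (hk : 1 ≤ k) (G : SimpleGraph V) [DecidableRel G.Adj]
    (hG : EdgeConnected G k) (r : V)
    (t : ℕ) (u : ℕ → V) (Sc : ℕ → Finset V)
    (hchain : IsSnugChain G k r t u Sc)
    (v : V) (hv : v ∉ Sc (t + 1))
    (i j : ℕ) (hji : j < i) (hit : i ≤ t)
    (S : Finset V) (hS : IsCut G k S) (hcross : Crosses S s(v, u i)) :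
    Crosses S s(v, u j) :=
  link_deepest_in_general k G hG r t u Sc hchain v hv i j hji hit S hS hcross
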